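/- arXiv:2407.12461 — 6 statements merged into one kernel-verified Lean document; each statement's English description precedes it below -/
import Mathlib

section
/- Let v_1,...,v_n be monotone subadditive valuations, A* be any allocation, and P̄ = (P̄_1,...,P̄_n) be a partial allocation such that (a) every bundle P̄_r is contained in some A*_i, (b) for each i and each r with P̄_r ⊆ A*_i, v_i(P̄_i) ≥ v_i(P̄_r), and (c) for each i and j, v_i(P̄_i) ≥ v_i(U_j) where U_j = A*_j \ (⋃_r P̄_r). Then NSW(P̄) ≥ (1/2) NSW(A*). -/
/-!
Every good of `A*_i` is either unassigned by `P̄` or lies in one of the bundles `P̄_r` with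
`r ∈ S_i`, so subadditivity together with (b) and (c) gives `v_i(A*_i) ≤ (1 + |S_i|) v_i(P̄_i)`.
Multiplying over `i` and applying AM-GM to the factors `1 + |S_i|`, whose sum is `2n`, loses
at most a factor `2` in the geometric mean.
-/

open Finset Function

section Allocation

variable {α ι κ : Type*} [DecidableEq α] [DecidableEq κ]

lemma subset_sdiff_union_biUnion_fiber [Fintype ι] {A : κ → Finset α} {P : ι → Finset α}
    {σ : ι → κ} (hA : Pairwise (Disjoint on A)) (hσ : ∀ r, P r ⊆ A (σ r)) (i : κ) :
    A i ⊆ (A i \ univ.biUnion P) ∪ ({r | σ r = i} : Finset ι).biUnion P := by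
  intro x hx
  by_cases hxP : x ∈ univ.biUnion P
  · obtain ⟨r, -, hr⟩ := mem_biUnion.mp hxP
    have hri : σ r = i := by
      by_contra h
      exact disjoint_left.mp (hA h) (hσ r hr) hx
    exact mem_union_right _ (mem_biUnion.mpr ⟨r, by simpa using hri, hr⟩)
  · exact mem_union_left _ (mem_sdiff.mpr ⟨hx, hxP⟩)

lemma le_one_add_card_mul_of_subadditive {w : Finset α → ℝ} (h0 : w ∅ = 0)
    (hmono : Monotone w) (hsub : ∀ S T, w (S ∪ T) ≤ w S + w T)
    {X U Q : Finset α} {s : Finset ι} {P : ι → Finset α}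
    (hX : X ⊆ U ∪ s.biUnion P) (hU : w U ≤ w Q) (hP : ∀ r ∈ s, w (P r) ≤ w Q) :
    w X ≤ (1 + #s) * w Q := by
  have hbiUnion : w (s.biUnion P) ≤ ∑ r ∈ s, w (P r) :=
    s.sup_eq_biUnion P ▸ s.apply_sup_le_sum h0 (hsub _ _)
  calc w X ≤ w (U ∪ s.biUnion P) := hmono hX
    _ ≤ w U + ∑ r ∈ s, w (P r) := (hsub _ _).trans (by gcongr)
    _ ≤ w Q + ∑ _r ∈ s, w Q := add_le_add hU (sum_le_sum hP)
    _ = (1 + #s) * w Q := by rw [sum_const, nsmul_eq_mul]; ring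

end Allocation

section Mean

variable {ι : Type*} [Fintype ι] [Nonempty ι]

lemma prod_rpow_inv_card_le_sum_div_card {c : ι → ℝ} (hc : 0 ≤ c) :
    (∏ i, c i) ^ (Fintype.card ι : ℝ)⁻¹ ≤ (∑ i, c i) / Fintype.card ι := by
  simpa using Real.geom_mean_le_arith_mean univ (fun _ => 1) c (fun _ _ => zero_le_one)
    (by simp [Fintype.card_pos]) (fun i _ => hc i)

lemma prod_rpow_inv_card_le_of_le_mul {a b c : ι → ℝ} (ha : 0 ≤ a) (hb : 0 ≤ b) (hc : 0 ≤ c)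
    (habc : ∀ i, a i ≤ c i * b i) :
    (∏ i, a i) ^ (Fintype.card ι : ℝ)⁻¹ ≤
      (∑ i, c i) / Fintype.card ι * (∏ i, b i) ^ (Fintype.card ι : ℝ)⁻¹ := by
  have hb' : 0 ≤ ∏ i, b i := prod_nonneg fun i _ => hb i
  have hc' : 0 ≤ ∏ i, c i := prod_nonneg fun i _ => hc i
  calc (∏ i, a i) ^ (Fintype.card ι : ℝ)⁻¹
      ≤ ((∏ i, c i) * ∏ i, b i) ^ (Fintype.card ι : ℝ)⁻¹ := by
        rw [← prod_mul_distrib]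
        exact Real.rpow_le_rpow (prod_nonneg fun i _ => ha i)
          (prod_le_prod (fun i _ => ha i) fun i _ => habc i) (by positivity)
    _ = (∏ i, c i) ^ (Fintype.card ι : ℝ)⁻¹ * (∏ i, b i) ^ (Fintype.card ι : ℝ)⁻¹ :=
        Real.mul_rpow hc' hb'
    _ ≤ _ := by
        gcongr
        exact prod_rpow_inv_card_le_sum_div_card hc

end Mean

theorem stmt_3_general (n m : ℕ) (hn : 0 < n)
    (v : Fin n → Finset (Fin m) → ℝ)
    (hnonneg : ∀ i S, 0 ≤ v i S)
    (hnorm : ∀ i, v i ∅ = 0)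
    (hmono : ∀ i (S T : Finset (Fin m)), S ⊆ T → v i S ≤ v i T)
    (hsub : ∀ i (S T : Finset (Fin m)), v i (S ∪ T) ≤ v i S + v i T)
    (A P : Fin n → Finset (Fin m))
    (hAdisj : ∀ i j, i ≠ j → Disjoint (A i) (A j))
    (σ : Fin n → Fin n)
    (hσ : ∀ r, P r ⊆ A (σ r))
    (hb : ∀ i r, σ r = i → v i (P r) ≤ v i (P i))
    (hc : ∀ i j, v i (A j \ Finset.univ.biUnion P) ≤ v i (P i)) :
    (1 / 2) * (∏ i, v i (A i)) ^ ((n : ℝ)⁻¹) ≤ (∏ i, v i (P i)) ^ ((n : ℝ)⁻¹) := by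
  have : Nonempty (Fin n) := ⟨⟨0, hn⟩⟩
  set c : Fin n → ℝ := fun i => 1 + #{r | σ r = i}
  have hvA : ∀ i, v i (A i) ≤ c i * v i (P i) := fun i =>
    le_one_add_card_mul_of_subadditive (hnorm i) (fun S T => hmono i S T) (hsub i)
      (subset_sdiff_union_biUnion_fiber (fun i j => hAdisj i j) hσ i) (hc i i)
      (fun r hr => hb i r (mem_filter.mp hr).2)
  have hsum : ∑ i, c i = 2 * n := by
    have hfibers : ∑ i, #{r | σ r = i} = n := by
      simpa using (card_eq_sum_card_fiberwise (s := univ) fun r _ => mem_univ (σ r)).symm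
    simp only [c, sum_add_distrib, sum_const, card_univ, Fintype.card_fin, nsmul_one]
    rw [← Nat.cast_sum, hfibers]
    ring
  have hmean := prod_rpow_inv_card_le_of_le_mul (fun i => hnonneg i (A i))
    (fun i => hnonneg i (P i)) (fun i => by positivity) hvA
  rw [Fintype.card_fin, hsum, mul_div_cancel_right₀ _ (by positivity)] at hmean
  linarith

/-- If a partial allocation P̄ satisfies: (a) each bundle P̄_r lies inside
some bundle A*_{σ r} of the allocation A*, (b) for each i and each r whose bundle lies
in A*_i, v_i(P̄_i) ≥ v_i(P̄_r), and (c) v_i(P̄_i) ≥ v_i(U_j) for the unassigned parts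
U_j = A*_j \ ⋃_r P̄_r, then NSW(P̄) ≥ (1/2)·NSW(A*). -/
theorem stmt_3 (n m : ℕ) (hn : 0 < n)
    (v : Fin n → Finset (Fin m) → ℝ)
    (hnonneg : ∀ i S, 0 ≤ v i S)
    (hnorm : ∀ i, v i ∅ = 0)
    (hmono : ∀ i (S T : Finset (Fin m)), S ⊆ T → v i S ≤ v i T)
    (hsub : ∀ i (S T : Finset (Fin m)), v i (S ∪ T) ≤ v i S + v i T)
    (A P : Fin n → Finset (Fin m))
    (hAdisj : ∀ i j, i ≠ j → Disjoint (A i) (A j))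
    (hAcomp : Finset.univ.biUnion A = (Finset.univ : Finset (Fin m)))
    (hPdisj : ∀ i j, i ≠ j → Disjoint (P i) (P j))
    (σ : Fin n → Fin n)
    (hσ : ∀ r, P r ⊆ A (σ r))
    (hb : ∀ i r, σ r = i → v i (P r) ≤ v i (P i))
    (hc : ∀ i j, v i (A j \ Finset.univ.biUnion P) ≤ v i (P i)) :
    (1 / 2) * (∏ i, v i (A i)) ^ ((n : ℝ)⁻¹) ≤ (∏ i, v i (P i)) ^ ((n : ℝ)⁻¹) :=
  stmt_3_general n m hn v hnonneg hnorm hmono hsub A P hAdisj σ hσ hb hc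
end

section
/- Consider a path graph on m vertices partitioned into n sub-paths Ã_1,...,Ã_n (each a set of consecutive vertices). Let P_1,...,P_n be pairwise disjoint sub-paths (sets of consecutive vertices, possibly empty), and let U_1,...,U_k be the connected components of the path after removing ⋃_r P_r (so k ≤ n+1). For each i, let S_i be the number of indices r with P_r ∩ Ã_i ≠ ∅ and L_i the number of components U_j with U_j ∩ Ã_i ≠ ∅. Then ∑_{i=1}^n (S_i + L_i) ≤ 3n. -/
/-!
Put the `P r` and the components `U j` together into one family of `n + k` pairwise disjoint
intervals. An interval meets at most one more block than the number of block ends `b` it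
crosses (i.e. contains both `b` and `b + 1`). Each block end is crossed by at most one interval
of the family, and the end of the block containing the largest point of the family is not
crossed at all, so the family meets blocks at most `(n + k) + (n - 1)` times. Finally
`k ≤ n + 1`: the left neighbour of each component is `0` or lies in some `P r`, and no `P r` is
the left neighbour of two components.
-/

/-- A set of consecutive integers (a sub-path of the path graph on ℕ). -/
def IsInterval (S : Finset ℕ) : Prop :=
  ∀ a b c : ℕ, a ∈ S → c ∈ S → a ≤ b → b ≤ c → b ∈ S

open Finset Function

theorem IsInterval.insert_of_succ_mem {S : Finset ℕ} (hS : IsInterval S) {a : ℕ}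
    (ha : a + 1 ∈ S) : IsInterval (insert a S) := by
  intro x y z hx hz hxy hyz
  rw [mem_insert] at hx hz ⊢
  rcases hx with rfl | hx <;> rcases hz with rfl | hz
  · omega
  · rcases hxy.eq_or_lt with rfl | hlt
    · exact .inl rfl
    · exact .inr (hS _ y z ha hz hlt hyz)
  · exact .inr (hS x y _ hx ha hxy (by omega))
  · exact .inr (hS x y z hx hz hxy hyz)

theorem IsInterval.eq_of_succ_notMem {A : Finset ℕ} (hA : IsInterval A) {b b' : ℕ}
    (hb : b ∈ A) (hb' : b' ∈ A) (hbs : b + 1 ∉ A) (hbs' : b' + 1 ∉ A) : b = b' := by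
  by_contra hne
  rcases Nat.lt_or_gt_of_ne hne with hlt | hlt
  · exact hbs (hA b (b + 1) b' hb hb' (by omega) hlt)
  · exact hbs' (hA b' (b' + 1) b hb' hb (by omega) hlt)

def CrossesRightEnd (S A : Finset ℕ) : Prop :=
  ∃ b ∈ A, b + 1 ∉ A ∧ b ∈ S ∧ b + 1 ∈ S

instance (S A : Finset ℕ) : Decidable (CrossesRightEnd S A) :=
  inferInstanceAs (Decidable (∃ b ∈ A, b + 1 ∉ A ∧ b ∈ S ∧ b + 1 ∈ S))

theorem not_crossesRightEnd_of_le_mem {S A : Finset ℕ} (hA : IsInterval A) {M : ℕ}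
    (hM : M ∈ A) (hSM : ∀ x ∈ S, x ≤ M) : ¬ CrossesRightEnd S A := by
  rintro ⟨b, hb, hbs, -, hbS⟩
  exact hbs (hA b (b + 1) M hb hM (by omega) (hSM _ hbS))

theorem sum_card_filter_comm {α β : Type*} [Fintype α] [Fintype β] (r : α → β → Prop)
    [∀ a b, Decidable (r a b)] : ∑ a, #{b | r a b} = ∑ b, #{a | r a b} :=
  sum_card_bipartiteAbove_eq_sum_card_bipartiteBelow r

section Blocks

variable {ι κ : Type*} [Fintype ι] [DecidableEq ι] [Fintype κ] {A : ι → Finset ℕ}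

theorem card_filter_inter_nonempty_le (hA : ∀ i, IsInterval (A i))
    (hAdisj : Pairwise (Disjoint on A)) {S : Finset ℕ} (hS : IsInterval S)
    (hSA : S ⊆ univ.biUnion A) :
    #{i | (S ∩ A i).Nonempty} ≤ #{i | CrossesRightEnd S (A i)} + 1 := by
  rcases S.eq_empty_or_nonempty with rfl | hne
  · simp
  set M := S.max' hne
  have hMS : M ∈ S := S.max'_mem hne
  obtain ⟨i₀, -, hMA⟩ := mem_biUnion.mp (hSA hMS)
  -- every other block met by `S` ends strictly before `M`, so `S` crosses its right end
  have hsub : ({i | (S ∩ A i).Nonempty} : Finset ι) ⊆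
      insert i₀ ({i | CrossesRightEnd S (A i)} : Finset ι) := by
    intro i hi
    obtain ⟨a, ha⟩ := (mem_filter.mp hi).2
    obtain ⟨haS, haA⟩ := mem_inter.mp ha
    rcases eq_or_ne i i₀ with rfl | hi₀
    · exact mem_insert_self _ _
    refine mem_insert_of_mem (mem_filter.mpr ⟨mem_univ _, ?_⟩)
    set b := (A i).max' ⟨a, haA⟩
    have hbA : b ∈ A i := (A i).max'_mem _
    have hab : a ≤ b := le_max' _ _ haA
    have haM : a ≤ M := le_max' _ _ haS
    have hbM : b < M := by
      by_contra! hMb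
      exact disjoint_left.mp (hAdisj hi₀) (hA i a M b haA hbA haM hMb) hMA
    refine ⟨b, hbA, fun h => by have := le_max' _ _ h; omega, hS a b M haS hMS hab hbM.le,
      hS a (b + 1) M haS hMS (by omega) hbM⟩
  exact (card_le_card hsub).trans (card_insert_le _ _)

theorem card_filter_crossesRightEnd_le_one {A : Finset ℕ} (hA : IsInterval A) {X : κ → Finset ℕ}
    (hXdisj : Pairwise (Disjoint on X)) : #{t | CrossesRightEnd (X t) A} ≤ 1 := by
  refine card_le_one.mpr fun t ht t' ht' => ?_
  obtain ⟨b, hbA, hbs, hbX, -⟩ := (mem_filter.mp ht).2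
  obtain ⟨b', hbA', hbs', hbX', -⟩ := (mem_filter.mp ht').2
  obtain rfl := hA.eq_of_succ_notMem hbA hbA' hbs hbs'
  by_contra hne
  exact disjoint_left.mp (hXdisj hne) hbX hbX'

/-- No interval crosses the right end of the block containing the largest point of the family. -/
theorem sum_card_filter_crossesRightEnd_le (hA : ∀ i, IsInterval (A i)) {X : κ → Finset ℕ}
    (hXdisj : Pairwise (Disjoint on X)) (hXA : ∀ t, X t ⊆ univ.biUnion A) :
    ∑ t, #{i | CrossesRightEnd (X t) (A i)} ≤ Fintype.card ι - 1 := by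
  rw [sum_card_filter_comm fun t i => CrossesRightEnd (X t) (A i)]
  rcases (univ.biUnion X).eq_empty_or_nonempty with hempty | hne
  · have hX (t) : X t = ∅ := subset_empty.mp (hempty ▸ subset_biUnion_of_mem X (mem_univ t))
    simp [CrossesRightEnd, hX]
  obtain ⟨t₀, -, hMX⟩ := mem_biUnion.mp ((univ.biUnion X).max'_mem hne)
  obtain ⟨i₀, -, hMA⟩ := mem_biUnion.mp (hXA t₀ hMX)
  have hzero : #{t | CrossesRightEnd (X t) (A i₀)} = 0 := by
    refine card_eq_zero.mpr (filter_eq_empty_iff.mpr fun t _ => ?_)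
    exact not_crossesRightEnd_of_le_mem (hA i₀) hMA fun x hx =>
      le_max' _ _ (mem_biUnion.mpr ⟨t, mem_univ t, hx⟩)
  rw [← sum_erase (f := fun i => #{t | CrossesRightEnd (X t) (A i)}) univ hzero]
  calc ∑ i ∈ univ.erase i₀, #{t | CrossesRightEnd (X t) (A i)}
      ≤ ∑ _i ∈ univ.erase i₀, 1 :=
        sum_le_sum fun i _ => card_filter_crossesRightEnd_le_one (hA i) hXdisj
    _ = Fintype.card ι - 1 := by simp [card_erase_of_mem]

theorem sum_card_filter_inter_nonempty_le (hA : ∀ i, IsInterval (A i))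
    (hAdisj : Pairwise (Disjoint on A)) {X : κ → Finset ℕ} (hX : ∀ t, IsInterval (X t))
    (hXdisj : Pairwise (Disjoint on X)) (hXA : ∀ t, X t ⊆ univ.biUnion A) :
    ∑ t, #{i | (X t ∩ A i).Nonempty} ≤ Fintype.card κ + (Fintype.card ι - 1) :=
  calc ∑ t, #{i | (X t ∩ A i).Nonempty}
      ≤ ∑ t, (#{i | CrossesRightEnd (X t) (A i)} + 1) :=
        sum_le_sum fun t _ => card_filter_inter_nonempty_le hA hAdisj (hX t) (hXA t)
    _ = ∑ t, #{i | CrossesRightEnd (X t) (A i)} + Fintype.card κ := by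
        simp [sum_add_distrib]
    _ ≤ Fintype.card ι - 1 + Fintype.card κ := by
        gcongr; exact sum_card_filter_crossesRightEnd_le hA hXdisj hXA
    _ = Fintype.card κ + (Fintype.card ι - 1) := add_comm _ _

end Blocks

theorem IsInterval.pred_min'_notMem {U C : Finset ℕ} (hU : IsInterval U) (hne : U.Nonempty)
    (hUC : U ⊆ C) (hmax : ∀ T, IsInterval T → U ⊆ T → T ⊆ C → T = U) (hpos : 0 < U.min' hne) :
    U.min' hne - 1 ∉ C := by
  intro hC
  have hsucc : U.min' hne - 1 + 1 ∈ U := by rw [Nat.sub_add_cancel hpos]; exact U.min'_mem hne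
  have hins := hmax _ (hU.insert_of_succ_mem hsucc) (subset_insert _ _)
    (insert_subset hC hUC)
  have := U.min'_le _ (hins ▸ mem_insert_self _ U)
  omega

theorem card_le_card_add_one_of_maximal {ι κ : Type*} [Fintype ι] [Fintype κ] {m : ℕ}
    {P : ι → Finset ℕ} (hP : ∀ r, IsInterval (P r)) {U : κ → Finset ℕ}
    (hU : ∀ j, IsInterval (U j)) (hUne : ∀ j, (U j).Nonempty)
    (hUdisj : Pairwise (Disjoint on U)) (hUsub : ∀ j, U j ⊆ Icc 1 m \ univ.biUnion P)
    (hUmax : ∀ j (T : Finset ℕ), IsInterval T → U j ⊆ T →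
      T ⊆ Icc 1 m \ univ.biUnion P → T = U j) :
    Fintype.card κ ≤ Fintype.card ι + 1 := by
  classical
  set a := fun j => (U j).min' (hUne j)
  have haU (j) : a j ∈ U j := (U j).min'_mem _
  have ha_pos (j) : 1 ≤ a j := (mem_Icc.mp (mem_sdiff.mp (hUsub j (haU j))).1).1
  have ha_notMem (j r) : a j - 1 + 1 ∉ P r := by
    rw [Nat.sub_add_cancel (ha_pos j)]
    exact fun h => (mem_sdiff.mp (hUsub j (haU j))).2 (mem_biUnion.mpr ⟨r, mem_univ r, h⟩)
  have ha_inj : a.Injective := fun j j' h => by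
    by_contra hne
    exact disjoint_left.mp (hUdisj hne) (haU j) (h ▸ haU j')
  have hleft (j) : a j = 1 ∨ ∃ r, a j - 1 ∈ P r := by
    by_contra! h
    refine (hU j).pred_min'_notMem (hUne j) (hUsub j) (hUmax j) (ha_pos j)
      (mem_sdiff.mpr ⟨mem_Icc.mpr ⟨?_, ?_⟩, fun hP => ?_⟩)
    · show 1 ≤ a j - 1
      have := ha_pos j; have := h.1; omega
    · show a j - 1 ≤ m
      have := (mem_Icc.mp (mem_sdiff.mp (hUsub j (haU j))).1).2; omega
    · obtain ⟨r, -, hr⟩ := mem_biUnion.mp hP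
      exact h.2 r hr
  let f : κ → Option ι := fun j => if h : ∃ r, a j - 1 ∈ P r then some h.choose else none
  have hf : f.Injective := by
    intro j j' hjj'
    apply ha_inj
    simp only [f] at hjj'
    split_ifs at hjj' with h h' h''
    · have hr := h.choose_spec
      have hr' := h'.choose_spec
      rw [Option.some_inj.mp hjj'] at hr
      have := (hP _).eq_of_succ_notMem hr hr' (ha_notMem j _) (ha_notMem j' _)
      have := ha_pos j; have := ha_pos j'
      omega
    · exact ((hleft j).resolve_right h).trans ((hleft j').resolve_right h'').symm
  simpa using Fintype.card_le_of_injective f hf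

theorem stmt_9_general (n m k : ℕ)
    (At : Fin n → Finset ℕ)
    (hAtInt : ∀ i, IsInterval (At i))
    (hAtDisj : ∀ i j, i ≠ j → Disjoint (At i) (At j))
    (hAtUnion : Finset.univ.biUnion At = Finset.Icc 1 m)
    (P : Fin n → Finset ℕ)
    (hPInt : ∀ r, IsInterval (P r))
    (hPDisj : ∀ r s, r ≠ s → Disjoint (P r) (P s))
    (hPSub : ∀ r, P r ⊆ Finset.Icc 1 m)
    (U : Fin k → Finset ℕ)
    (hUInt : ∀ j, IsInterval (U j))
    (hUNe : ∀ j, (U j).Nonempty)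
    (hUDisj : ∀ j j', j ≠ j' → Disjoint (U j) (U j'))
    (hUUnion : Finset.univ.biUnion U = Finset.Icc 1 m \ Finset.univ.biUnion P)
    (hUMax : ∀ j (T : Finset ℕ), IsInterval T → U j ⊆ T →
      T ⊆ Finset.Icc 1 m \ Finset.univ.biUnion P → T = U j) :
    ∑ i : Fin n,
        ((Finset.univ.filter (fun r : Fin n => (P r ∩ At i).Nonempty)).card +
         (Finset.univ.filter (fun j : Fin k => (U j ∩ At i).Nonempty)).card) ≤ 3 * n := by
  obtain rfl | hn := n.eq_zero_or_pos
  · simp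
  have hUsub (j) : U j ⊆ Icc 1 m \ univ.biUnion P :=
    hUUnion ▸ subset_biUnion_of_mem U (mem_univ j)
  have hk : k ≤ n + 1 := by
    simpa using card_le_card_add_one_of_maximal hPInt hUInt hUNe (fun j j' => hUDisj j j')
      hUsub hUMax
  set X : Fin n ⊕ Fin k → Finset ℕ := Sum.elim P U
  have hXInt : ∀ t, IsInterval (X t) := by rintro (r | j); exacts [hPInt r, hUInt j]
  have hXdisj : Pairwise (Disjoint on X) := by
    rintro (r | j) (r' | j') hne
    · exact hPDisj r r' (by simpa using hne)
    · exact disjoint_left.mpr fun x hx hx' =>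
        (mem_sdiff.mp (hUsub j' hx')).2 (mem_biUnion.mpr ⟨r, mem_univ r, hx⟩)
    · exact disjoint_left.mpr fun x hx hx' =>
        (mem_sdiff.mp (hUsub j hx)).2 (mem_biUnion.mpr ⟨r', mem_univ r', hx'⟩)
    · exact hUDisj j j' (by simpa using hne)
  have hXA : ∀ t, X t ⊆ univ.biUnion At := by
    rintro (r | j)
    · exact hAtUnion ▸ hPSub r
    · exact hAtUnion ▸ (hUsub j).trans sdiff_subset
  calc _ = ∑ t, #{i | (X t ∩ At i).Nonempty} := by
        rw [Fintype.sum_sum_type, sum_add_distrib,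
          sum_card_filter_comm fun i r => (P r ∩ At i).Nonempty,
          sum_card_filter_comm fun i j => (U j ∩ At i).Nonempty]
        rfl
    _ ≤ Fintype.card (Fin n ⊕ Fin k) + (Fintype.card (Fin n) - 1) :=
        sum_card_filter_inter_nonempty_le hAtInt (fun i j => hAtDisj i j) hXInt hXdisj hXA
    _ ≤ 3 * n := by simp only [Fintype.card_sum, Fintype.card_fin]; omega

/-- If a path on m vertices is partitioned into n sub-paths Ã_1,...,Ã_n,
the P_r are pairwise disjoint sub-paths, and the U_j are the connected components of
the path after removing ⋃_r P_r, then ∑_i (S_i + L_i) ≤ 3n, where S_i counts the P_r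
intersecting Ã_i and L_i counts the U_j intersecting Ã_i. -/
theorem stmt_9 (n m k : ℕ) (hn : 0 < n)
    (At : Fin n → Finset ℕ)
    (hAtInt : ∀ i, IsInterval (At i))
    (hAtDisj : ∀ i j, i ≠ j → Disjoint (At i) (At j))
    (hAtUnion : Finset.univ.biUnion At = Finset.Icc 1 m)
    (P : Fin n → Finset ℕ)
    (hPInt : ∀ r, IsInterval (P r))
    (hPDisj : ∀ r s, r ≠ s → Disjoint (P r) (P s))
    (hPSub : ∀ r, P r ⊆ Finset.Icc 1 m)
    (U : Fin k → Finset ℕ)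
    (hUInt : ∀ j, IsInterval (U j))
    (hUNe : ∀ j, (U j).Nonempty)
    (hUDisj : ∀ j j', j ≠ j' → Disjoint (U j) (U j'))
    (hUUnion : Finset.univ.biUnion U = Finset.Icc 1 m \ Finset.univ.biUnion P)
    (hUMax : ∀ j (T : Finset ℕ), IsInterval T → U j ⊆ T →
      T ⊆ Finset.Icc 1 m \ Finset.univ.biUnion P → T = U j) :
    ∑ i : Fin n,
        ((Finset.univ.filter (fun r : Fin n => (P r ∩ At i).Nonempty)).card +
         (Finset.univ.filter (fun j : Fin k => (U j ∩ At i).Nonempty)).card) ≤ 3 * n :=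
  stmt_9_general n m k At hAtInt hAtDisj hAtUnion P hPInt hPDisj hPSub U hUInt hUNe hUDisj hUUnion
    hUMax
end

section
/- For any fair division instance with two agents having monotone subadditive valuations, there exists a complete EF1 allocation A with NSW(A) ≥ (1/√2)·NSW(A*), where A* is a Nash-optimal allocation. -/
/-!
Let `S` maximize the Nash product `u₀ S * u₁ Sᶜ`. If this allocation is EF1 we are done. Otherwise
some agent, say agent 0, strongly envies the other bundle, so `u₀ S ≤ u₀ Sᶜ`. Moving goods from
`Sᶜ` to `S` one at a time, agent 0 reaches a split `X ⊇ S`, `Xᶜ` of the goods that is EF1 for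
agent 0 in both directions and in which both parts are worth at least `u₀ S` to agent 0. Agent 1
then chooses the part they prefer: by subadditivity it is worth at least half of `u₁ univ ≥ u₁ Sᶜ`,
so the product drops by at most a factor `2`.
-/

open Finset

section EnvyFreeness

variable {α : Type*} [DecidableEq α] {u : Finset α → ℝ} {X Y : Finset α}

def EnvyFreeUpToOne (u : Finset α → ℝ) (X Y : Finset α) : Prop :=
  Y ≠ ∅ → ∃ g ∈ Y, u (Y \ {g}) ≤ u X

theorem EnvyFreeUpToOne.of_le (hu : Monotone u) (h : u Y ≤ u X) : EnvyFreeUpToOne u X Y := by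
  intro hY
  obtain ⟨g, hg⟩ := nonempty_iff_ne_empty.mpr hY
  exact ⟨g, hg, (hu sdiff_subset).trans h⟩

theorem le_of_not_envyFreeUpToOne (hu : Monotone u) (h : ¬EnvyFreeUpToOne u X Y) : u X ≤ u Y :=
  not_lt.mp fun hlt => h (.of_le hu hlt.le)

end EnvyFreeness

section TwoAgents

variable {α : Type*} [Fintype α] [DecidableEq α] {u u₀ u₁ : Finset α → ℝ}

/-- Agent 0 receives `X` and agent 1 receives `Xᶜ`. -/
def IsEF1Allocation (u₀ u₁ : Finset α → ℝ) (X : Finset α) : Prop :=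
  EnvyFreeUpToOne u₀ X Xᶜ ∧ EnvyFreeUpToOne u₁ Xᶜ X

theorem IsEF1Allocation.compl {X : Finset α} (h : IsEF1Allocation u₀ u₁ X) :
    IsEF1Allocation u₁ u₀ Xᶜ := by
  rw [IsEF1Allocation, compl_compl]
  exact h.symm

theorem exists_superset_envyFreeUpToOne_both (hu : Monotone u) (X : Finset α)
    (h : u X ≤ u Xᶜ) :
    ∃ X', X ⊆ X' ∧ u X ≤ u X'ᶜ ∧ EnvyFreeUpToOne u X' X'ᶜ ∧ EnvyFreeUpToOne u X'ᶜ X' := by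
  by_cases hX : EnvyFreeUpToOne u X Xᶜ
  · exact ⟨X, subset_rfl, h, hX, .of_le hu h⟩
  obtain ⟨hne, hlt⟩ : Xᶜ ≠ ∅ ∧ ∀ g ∈ Xᶜ, u X < u (Xᶜ \ {g}) := by
    simpa [EnvyFreeUpToOne] using hX
  obtain ⟨g, hg⟩ := nonempty_iff_ne_empty.mpr hne
  have hcompl : (insert g X)ᶜ = Xᶜ \ {g} := by rw [compl_insert, erase_eq]
  have hsub : X ⊆ insert g X := subset_insert g X
  by_cases hle : u (insert g X) ≤ u (insert g X)ᶜ
  · obtain ⟨X', hX', hle', hef, hef'⟩ := exists_superset_envyFreeUpToOne_both hu (insert g X) hle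
    exact ⟨X', hsub.trans hX', (hu hsub).trans hle', hef, hef'⟩
  · refine ⟨insert g X, hsub, hcompl ▸ (hlt g hg).le, .of_le hu (not_le.mp hle).le,
      fun _ => ⟨g, mem_insert_self g X, ?_⟩⟩
    rw [← erase_eq, erase_insert (mem_compl.mp hg), hcompl]
    exact (hlt g hg).le
termination_by #Xᶜ
decreasing_by rw [compl_insert]; exact card_erase_lt_of_mem hg

theorem exists_isEF1Allocation_of_le (hnn₀ : ∀ S, 0 ≤ u₀ S) (hnn₁ : ∀ S, 0 ≤ u₁ S)
    (hu₀ : Monotone u₀) (hu₁ : Monotone u₁) (hsub₁ : ∀ S T, u₁ (S ∪ T) ≤ u₁ S + u₁ T)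
    {S : Finset α} (h : u₀ S ≤ u₀ Sᶜ) :
    ∃ X, IsEF1Allocation u₀ u₁ X ∧ u₀ S * u₁ Sᶜ ≤ 2 * (u₀ X * u₁ Xᶜ) := by
  obtain ⟨X, hSX, hle, hef, hef'⟩ := exists_superset_envyFreeUpToOne_both hu₀ S h
  have hsplit : u₁ Sᶜ ≤ u₁ X + u₁ Xᶜ :=
    (hu₁ (subset_univ _)).trans (union_compl X ▸ hsub₁ X Xᶜ)
  rcases le_total (u₁ X) (u₁ Xᶜ) with h₁ | h₁
  · refine ⟨X, ⟨hef, .of_le hu₁ h₁⟩, ?_⟩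
    calc u₀ S * u₁ Sᶜ ≤ u₀ X * (2 * u₁ Xᶜ) :=
          mul_le_mul (hu₀ hSX) (by linarith) (hnn₁ _) (hnn₀ _)
      _ = 2 * (u₀ X * u₁ Xᶜ) := by ring
  · refine ⟨Xᶜ, ?_, ?_⟩
    · rw [IsEF1Allocation, compl_compl]
      exact ⟨hef', .of_le hu₁ h₁⟩
    · calc u₀ S * u₁ Sᶜ ≤ u₀ Xᶜ * (2 * u₁ X) :=
            mul_le_mul hle (by linarith) (hnn₁ _) (hnn₀ _)
        _ = 2 * (u₀ Xᶜ * u₁ Xᶜᶜ) := by rw [compl_compl]; ring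

theorem exists_isEF1Allocation_nash_le_two_mul (hnn₀ : ∀ S, 0 ≤ u₀ S) (hnn₁ : ∀ S, 0 ≤ u₁ S)
    (hu₀ : Monotone u₀) (hu₁ : Monotone u₁) (hsub₀ : ∀ S T, u₀ (S ∪ T) ≤ u₀ S + u₀ T)
    (hsub₁ : ∀ S T, u₁ (S ∪ T) ≤ u₁ S + u₁ T) :
    ∃ X, IsEF1Allocation u₀ u₁ X ∧ ∀ Y, u₀ Y * u₁ Yᶜ ≤ 2 * (u₀ X * u₁ Xᶜ) := by
  obtain ⟨S, hS⟩ := Finite.exists_max fun S : Finset α => u₀ S * u₁ Sᶜ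
  suffices ∃ X, IsEF1Allocation u₀ u₁ X ∧ u₀ S * u₁ Sᶜ ≤ 2 * (u₀ X * u₁ Xᶜ) by
    obtain ⟨X, hX, hle⟩ := this
    exact ⟨X, hX, fun Y => (hS Y).trans hle⟩
  by_cases h₀ : EnvyFreeUpToOne u₀ S Sᶜ
  · by_cases h₁ : EnvyFreeUpToOne u₁ Sᶜ S
    · exact ⟨S, ⟨h₀, h₁⟩, by nlinarith [mul_nonneg (hnn₀ S) (hnn₁ Sᶜ)]⟩
    · obtain ⟨X, hX, hle⟩ := exists_isEF1Allocation_of_le hnn₁ hnn₀ hu₁ hu₀ hsub₀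
        (S := Sᶜ) (by rw [compl_compl]; exact le_of_not_envyFreeUpToOne hu₁ h₁)
      refine ⟨Xᶜ, hX.compl, ?_⟩
      rw [compl_compl] at hle ⊢
      linarith [mul_comm (u₀ S) (u₁ Sᶜ), mul_comm (u₀ Xᶜ) (u₁ X)]
  · exact exists_isEF1Allocation_of_le hnn₀ hnn₁ hu₀ hu₁ hsub₁ (le_of_not_envyFreeUpToOne hu₀ h₀)

end TwoAgents

theorem one_div_sqrt_two_mul_sqrt_le_sqrt {x y : ℝ} (h : x ≤ 2 * y) : 1 / √2 * √x ≤ √y := by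
  rw [one_div_mul_eq_div, ← Real.sqrt_div' x zero_le_two]
  exact Real.sqrt_le_sqrt (by linarith)

theorem stmt_10_general (m : ℕ)
    (v : Fin 2 → Finset (Fin m) → ℝ)
    (hnonneg : ∀ i S, 0 ≤ v i S)
    (hmono : ∀ i (S T : Finset (Fin m)), S ⊆ T → v i S ≤ v i T)
    (hsub : ∀ i (S T : Finset (Fin m)), v i (S ∪ T) ≤ v i S + v i T) :
    ∃ A : Fin 2 → Finset (Fin m),
      Disjoint (A 0) (A 1) ∧
      A 0 ∪ A 1 = (Finset.univ : Finset (Fin m)) ∧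
      (∀ i j, A j ≠ ∅ → ∃ g ∈ A j, v i (A j \ {g}) ≤ v i (A i)) ∧
      (∀ B : Fin 2 → Finset (Fin m),
        Disjoint (B 0) (B 1) →
        B 0 ∪ B 1 = (Finset.univ : Finset (Fin m)) →
        (1 / Real.sqrt 2) * Real.sqrt (v 0 (B 0) * v 1 (B 1)) ≤
          Real.sqrt (v 0 (A 0) * v 1 (A 1))) := by
  have hmono' : ∀ i, Monotone (v i) := fun i S T => hmono i S T
  obtain ⟨X, ⟨hef₀, hef₁⟩, hX⟩ := exists_isEF1Allocation_nash_le_two_mul (hnonneg 0) (hnonneg 1)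
    (hmono' 0) (hmono' 1) (hsub 0) (hsub 1)
  refine ⟨![X, Xᶜ], disjoint_compl_right, union_compl X, ?_, fun B hd hu => ?_⟩
  · intro i j
    fin_cases i <;> fin_cases j
    exacts [EnvyFreeUpToOne.of_le (hmono' 0) le_rfl, hef₀, hef₁,
      EnvyFreeUpToOne.of_le (hmono' 1) le_rfl]
  · have hB : B 1 = (B 0)ᶜ :=
      eq_compl_iff_isCompl.mpr ⟨hd.symm, codisjoint_iff.mpr (sup_comm (B 1) (B 0) ▸ hu)⟩
    rw [hB]
    exact one_div_sqrt_two_mul_sqrt_le_sqrt (hX (B 0))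

/-- For two agents with monotone subadditive valuations, there is a
complete EF1 allocation A with NSW(A) ≥ (1/√2)·NSW(A*), A* the Nash-optimal
allocation (equivalently, the bound holds against every complete allocation). -/
theorem stmt_10 (m : ℕ)
    (v : Fin 2 → Finset (Fin m) → ℝ)
    (hnonneg : ∀ i S, 0 ≤ v i S)
    (hnorm : ∀ i, v i ∅ = 0)
    (hmono : ∀ i (S T : Finset (Fin m)), S ⊆ T → v i S ≤ v i T)
    (hsub : ∀ i (S T : Finset (Fin m)), v i (S ∪ T) ≤ v i S + v i T) :
    ∃ A : Fin 2 → Finset (Fin m),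
      Disjoint (A 0) (A 1) ∧
      A 0 ∪ A 1 = (Finset.univ : Finset (Fin m)) ∧
      (∀ i j, A j ≠ ∅ → ∃ g ∈ A j, v i (A j \ {g}) ≤ v i (A i)) ∧
      (∀ B : Fin 2 → Finset (Fin m),
        Disjoint (B 0) (B 1) →
        B 0 ∪ B 1 = (Finset.univ : Finset (Fin m)) →
        (1 / Real.sqrt 2) * Real.sqrt (v 0 (B 0) * v 1 (B 1)) ≤
          Real.sqrt (v 0 (A 0) * v 1 (A 1))) :=
  stmt_10_general m v hnonneg hmono hsub
end

section
/- In the instance with n agents and goods G_1 = {g_1}, G_i = {g_i^1, g_i^2} (2 ≤ i ≤ n) and the valuations defined via (1−δ)|S ∩ G_i| and the max-thresholds with G_{i+1}, every EF1 allocation A satisfies v_i(A_i) ≤ 1 + δ for every agent i. -/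
/-- In the hard instance with goods G_1 ∪ ... ∪ G_n (|G_1| = 1,
|G_i| = 2 for i ≥ 2) and the threshold valuations, every EF1 allocation gives every
agent value at most 1 + δ. -/
theorem stmt_12 (n : ℕ) (hn : 0 < n) (δ : ℝ) (hδ0 : 0 < δ) (hδ1 : δ < 1 / 10)
    (G : Fin n → Finset (Fin (2 * n - 1)))
    (hGdisj : ∀ i j, i ≠ j → Disjoint (G i) (G j))
    (hGunion : Finset.univ.biUnion G = (Finset.univ : Finset (Fin (2 * n - 1))))
    (hG1 : (G ⟨0, hn⟩).card = 1)
    (hG2 : ∀ i : Fin n, (i : ℕ) ≠ 0 → (G i).card = 2)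
    (v : Fin n → Finset (Fin (2 * n - 1)) → ℝ)
    (hv : ∀ i j : Fin n, (j : ℕ) = (i : ℕ) + 1 → ∀ S,
      v i S =
        if (S ∩ G j).card = 0 then (1 - δ) * (S ∩ G i).card
        else if (S ∩ G j).card = 1 then max 1 ((1 - δ) * (S ∩ G i).card)
        else max (1 + δ) ((1 - δ) * (S ∩ G i).card))
    (hvlast : ∀ i : Fin n, (i : ℕ) = n - 1 → ∀ S, v i S = (1 - δ) * (S ∩ G i).card)
    (A : Fin n → Finset (Fin (2 * n - 1)))
    (hAdisj : ∀ i j, i ≠ j → Disjoint (A i) (A j))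
    (hAcomp : Finset.univ.biUnion A = (Finset.univ : Finset (Fin (2 * n - 1))))
    (hEF1 : ∀ i j, A j ≠ ∅ → ∃ g ∈ A j, v i (A j \ {g}) ≤ v i (A i)) :
    ∀ i, v i (A i) ≤ 1 + δ := by
  -- Key chain lemma: for every k ≥ 1, agent k does not hold both goods of G_k.
  have key : ∀ k : ℕ, ∀ hk : k < n, 1 ≤ k → (A ⟨k, hk⟩ ∩ G ⟨k, hk⟩).card ≤ 1 := by
    intro k
    induction k with
    | zero => intro hk h1; omega
    | succ k ih =>
      intro hk _
      by_contra hc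
      push_neg at hc
      have hk' : k < n := by omega
      have hGc : (G ⟨k + 1, hk⟩).card = 2 := hG2 _ (by simp)
      have hcard2 : (A ⟨k + 1, hk⟩ ∩ G ⟨k + 1, hk⟩).card = 2 := by
        have : (A ⟨k + 1, hk⟩ ∩ G ⟨k + 1, hk⟩).card ≤ (G ⟨k + 1, hk⟩).card :=
          Finset.card_le_card Finset.inter_subset_right
        omega
      have heq : A ⟨k + 1, hk⟩ ∩ G ⟨k + 1, hk⟩ = G ⟨k + 1, hk⟩ :=
        Finset.eq_of_subset_of_card_le Finset.inter_subset_right (by omega)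
      have hsub : G ⟨k + 1, hk⟩ ⊆ A ⟨k + 1, hk⟩ := by
        intro x hx
        rw [← heq] at hx
        exact (Finset.mem_inter.mp hx).1
      have hAne : A ⟨k + 1, hk⟩ ≠ ∅ := by
        intro h
        rw [h] at hcard2
        simp at hcard2
      obtain ⟨g, hg, hle⟩ := hEF1 ⟨k, hk'⟩ ⟨k + 1, hk⟩ hAne
      -- value of bundle A_{k+1} \ {g} for agent k is at least 1
      have hrest : 1 ≤ ((A ⟨k + 1, hk⟩ \ {g}) ∩ G ⟨k + 1, hk⟩).card := by
        have hss : (A ⟨k + 1, hk⟩ ∩ G ⟨k + 1, hk⟩) \ {g}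
            ⊆ (A ⟨k + 1, hk⟩ \ {g}) ∩ G ⟨k + 1, hk⟩ := by
          intro x hx
          simp only [Finset.mem_sdiff, Finset.mem_inter, Finset.mem_singleton] at *
          tauto
        have h1 : (A ⟨k + 1, hk⟩ ∩ G ⟨k + 1, hk⟩).card ≤
            ((A ⟨k + 1, hk⟩ ∩ G ⟨k + 1, hk⟩) \ {g}).card + ({g} : Finset _).card :=
          Finset.card_le_card_sdiff_add_card
        have h2 := Finset.card_le_card hss
        simp only [Finset.card_singleton] at h1
        omega
      have hvge : (1 : ℝ) ≤ v ⟨k, hk'⟩ (A ⟨k + 1, hk⟩ \ {g}) := by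
        rw [hv ⟨k, hk'⟩ ⟨k + 1, hk⟩ rfl]
        split_ifs with h0 h1
        · omega
        · exact le_max_left _ _
        · have : (1 : ℝ) ≤ 1 + δ := by linarith
          exact this.trans (le_max_left _ _)
      have hvAk : (1 : ℝ) ≤ v ⟨k, hk'⟩ (A ⟨k, hk'⟩) := le_trans hvge hle
      -- but agent k's bundle misses G_{k+1}, so its value is (1-δ)·|A_k ∩ G_k| ≤ 1-δ
      have hdisjA : Disjoint (A ⟨k, hk'⟩) (A ⟨k + 1, hk⟩) :=
        hAdisj _ _ (by simp [Fin.ext_iff])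
      have hempty : A ⟨k, hk'⟩ ∩ G ⟨k + 1, hk⟩ = ∅ := by
        apply Finset.eq_empty_of_forall_notMem
        intro x hx
        rw [Finset.mem_inter] at hx
        exact (Finset.disjoint_left.mp hdisjA hx.1) (hsub hx.2)
      have hcb : (A ⟨k, hk'⟩ ∩ G ⟨k, hk'⟩).card ≤ 1 := by
        rcases Nat.eq_zero_or_pos k with rfl | hkpos
        · have hle1 : (A ⟨0, hk'⟩ ∩ G ⟨0, hk'⟩).card ≤ (G ⟨0, hk'⟩).card :=
            Finset.card_le_card Finset.inter_subset_right
          have h01 : (G (⟨0, hk'⟩ : Fin n)).card = 1 := hG1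
          omega
        · exact ih hk' hkpos
      rw [hv ⟨k, hk'⟩ ⟨k + 1, hk⟩ rfl, hempty] at hvAk
      norm_num at hvAk
      have hcbr : ((A ⟨k, hk'⟩ ∩ G ⟨k, hk'⟩).card : ℝ) ≤ 1 := by exact_mod_cast hcb
      nlinarith
  intro i
  -- bound on |A_i ∩ G_i|
  have hcb : (A i ∩ G i).card ≤ 1 := by
    rcases Nat.eq_zero_or_pos (i : ℕ) with h0 | hpos
    · have hi : i = ⟨0, hn⟩ := by
        apply Fin.ext; simpa using h0
      subst hi
      have hle1 : (A ⟨0, hn⟩ ∩ G ⟨0, hn⟩).card ≤ (G ⟨0, hn⟩).card :=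
        Finset.card_le_card Finset.inter_subset_right
      omega
    · have := key (i : ℕ) i.isLt hpos
      simpa using this
  have hcbr : ((A i ∩ G i).card : ℝ) ≤ 1 := by exact_mod_cast hcb
  rcases eq_or_ne (i : ℕ) (n - 1) with hlast | hnot
  · rw [hvlast i hlast]
    nlinarith
  · have hin : (i : ℕ) + 1 < n := by
      have := i.isLt; omega
    rw [hv i ⟨(i : ℕ) + 1, hin⟩ rfl]
    split_ifs with h0 h1
    · nlinarith
    · apply max_le <;> nlinarith
    · apply max_le <;> nlinarith
end

section
/- There is a fair division instance with two agents having identical monotone subadditive valuations and three goods in which every EF1 allocation A satisfies NSW(A)^2 ≤ (1/2)·NSW(A*)^2 in the limit (precisely: for every ε ∈ (0,1), NSW(A)^2 ≤ 1 while NSW(A*)^2 = 2(1−ε)), so no EF1 allocation achieves NSW better than 1/√2 times optimal. -/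
set_option maxHeartbeats 1000000

def myv (ε : ℝ) (S : Finset (Fin 3)) : ℝ :=
  if S = ∅ then 0 else if ({1,2} : Finset (Fin 3)) ⊆ S then 2
  else if S = ({0} : Finset (Fin 3)) then 1 - ε else 1

def myw (s : ℝ) (S : Finset (Fin 3)) : ℝ :=
  if S = ∅ then 0 else if S = Finset.univ then 2 * s else s

lemma enum3 : ∀ S : Finset (Fin 3), S = ∅ ∨ S = {0} ∨ S = {1} ∨ S = {2} ∨
    S = {0,1} ∨ S = {0,2} ∨ S = {1,2} ∨ S = {0,1,2} := by decide

/-- For every ε ∈ (0,1) there is an instance with two agents having an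
identical monotone subadditive valuation over three goods in which the optimal
NSW² equals 2(1−ε) while every EF1 allocation A has NSW(A)² ≤ 1. -/
theorem stmt_14 (ε : ℝ) (hε0 : 0 < ε) (hε1 : ε < 1) :
    ∃ v : Finset (Fin 3) → ℝ,
      (∀ S, 0 ≤ v S) ∧
      v ∅ = 0 ∧
      (∀ S T : Finset (Fin 3), S ⊆ T → v S ≤ v T) ∧
      (∀ S T : Finset (Fin 3), v (S ∪ T) ≤ v S + v T) ∧
      (∃ Astar : Fin 2 → Finset (Fin 3),
        Disjoint (Astar 0) (Astar 1) ∧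
        Astar 0 ∪ Astar 1 = (Finset.univ : Finset (Fin 3)) ∧
        v (Astar 0) * v (Astar 1) = 2 * (1 - ε) ∧
        (∀ B : Fin 2 → Finset (Fin 3),
          Disjoint (B 0) (B 1) →
          B 0 ∪ B 1 = (Finset.univ : Finset (Fin 3)) →
          v (B 0) * v (B 1) ≤ 2 * (1 - ε))) ∧
      (∀ A : Fin 2 → Finset (Fin 3),
        Disjoint (A 0) (A 1) →
        A 0 ∪ A 1 = (Finset.univ : Finset (Fin 3)) →
        (∀ i j : Fin 2, A j ≠ ∅ → ∃ g ∈ A j, v (A j \ {g}) ≤ v (A i)) →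
        v (A 0) * v (A 1) ≤ 1) := by
  rcases le_or_gt ε (1/2) with hc | hc
  · -- small ε: the subadditive instance from the paper
    refine ⟨myv ε, ?_, ?_, ?_, ?_, ?_, ?_⟩
    · intro S; unfold myv; split_ifs <;> linarith
    · simp [myv]
    · intro S T hST
      rcases enum3 S with rfl|rfl|rfl|rfl|rfl|rfl|rfl|rfl <;>
        rcases enum3 T with rfl|rfl|rfl|rfl|rfl|rfl|rfl|rfl <;>
        simp_all (config := {decide := true}) [myv] <;> linarith
    · intro S T
      rcases enum3 S with rfl|rfl|rfl|rfl|rfl|rfl|rfl|rfl <;>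
        rcases enum3 T with rfl|rfl|rfl|rfl|rfl|rfl|rfl|rfl <;>
        simp_all (config := {decide := true}) [myv] <;> linarith
    · refine ⟨![{0}, {1,2}], by decide, by decide, ?_, ?_⟩
      · show myv ε {0} * myv ε {1,2} = 2 * (1 - ε)
        simp (config := {decide := true}) [myv]
        ring
      · intro B hdisj hunion
        have h1 : B 1 = Finset.univ \ B 0 := by
          rw [← hunion, Finset.union_sdiff_cancel_left hdisj]
        rcases enum3 (B 0) with h|h|h|h|h|h|h|h <;>
          rw [h] at h1 ⊢ <;> rw [h1] <;>
          simp (config := {decide := true}) [myv] <;> linarith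
    · intro A hdisj hunion hef1
      have h1 : A 1 = Finset.univ \ A 0 := by
        rw [← hunion, Finset.union_sdiff_cancel_left hdisj]
      rcases enum3 (A 0) with h|h|h|h|h|h|h|h <;> rw [h] at h1 ⊢ <;> rw [h1]
      case _ => simp (config := {decide := true}) [myv]
      case _ => -- A 0 = {0}, A 1 = {1,2}
        exfalso
        have h2 : (Finset.univ \ ({0} : Finset (Fin 3))) = {1,2} := by decide
        rw [h2] at h1
        obtain ⟨g, hg, hle⟩ := hef1 0 1 (by rw [h1]; decide)
        rw [h1] at hg
        rw [h1, h] at hle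
        fin_cases g
        · exact absurd hg (by decide)
        · simp (config := {decide := true}) [myv] at hle
          linarith
        · simp (config := {decide := true}) [myv] at hle
          linarith
      case _ => simp (config := {decide := true}) [myv]
      case _ => simp (config := {decide := true}) [myv]
      case _ => simp (config := {decide := true}) [myv]
      case _ => simp (config := {decide := true}) [myv]
      case _ => -- A 0 = {1,2}, A 1 = {0}
        exfalso
        have h2 : (Finset.univ \ ({1,2} : Finset (Fin 3))) = {0} := by decide
        rw [h2] at h1
        obtain ⟨g, hg, hle⟩ := hef1 1 0 (by rw [h]; decide)
        rw [h] at hg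
        rw [h, h1] at hle
        fin_cases g
        · exact absurd hg (by decide)
        · simp (config := {decide := true}) [myv] at hle
          linarith
        · simp (config := {decide := true}) [myv] at hle
          linarith
      case _ => simp (config := {decide := true}) [myv]
  · -- large ε: a flat instance with value √(2(1-ε)) on proper nonempty sets
    set δ : ℝ := 2 * (1 - ε) with hδ
    have hδ0 : 0 < δ := by simp only [hδ]; linarith
    have hδ1 : δ ≤ 1 := by simp only [hδ]; linarith
    set s : ℝ := Real.sqrt δ with hs
    have hs0 : 0 < s := Real.sqrt_pos.mpr hδ0
    have hs1 : s ≤ 1 := Real.sqrt_le_one.mpr hδ1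
    have hss : s * s = δ := Real.mul_self_sqrt hδ0.le
    refine ⟨myw s, ?_, ?_, ?_, ?_, ?_, ?_⟩
    · intro S; unfold myw; split_ifs <;> linarith
    · simp [myw]
    · intro S T hST
      rcases enum3 S with rfl|rfl|rfl|rfl|rfl|rfl|rfl|rfl <;>
        rcases enum3 T with rfl|rfl|rfl|rfl|rfl|rfl|rfl|rfl <;>
        simp_all (config := {decide := true}) [myw] <;> linarith
    · intro S T
      rcases enum3 S with rfl|rfl|rfl|rfl|rfl|rfl|rfl|rfl <;>
        rcases enum3 T with rfl|rfl|rfl|rfl|rfl|rfl|rfl|rfl <;>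
        simp_all (config := {decide := true}) [myw] <;> linarith
    · refine ⟨![{0}, {1,2}], by decide, by decide, ?_, ?_⟩
      · show myw s {0} * myw s {1,2} = 2 * (1 - ε)
        simp (config := {decide := true}) [myw]
        rw [hss]
      · intro B hdisj hunion
        have h1 : B 1 = Finset.univ \ B 0 := by
          rw [← hunion, Finset.union_sdiff_cancel_left hdisj]
        rcases enum3 (B 0) with h|h|h|h|h|h|h|h <;>
          rw [h] at h1 ⊢ <;> rw [h1] <;>
          simp (config := {decide := true}) [myw] <;> nlinarith
    · intro A hdisj hunion hef1
      have h1 : A 1 = Finset.univ \ A 0 := by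
        rw [← hunion, Finset.union_sdiff_cancel_left hdisj]
      rcases enum3 (A 0) with h|h|h|h|h|h|h|h <;> rw [h] at h1 ⊢ <;> rw [h1] <;>
        simp (config := {decide := true}) [myw] <;> nlinarith
end

section
/- There exists a fair division instance with two agents, where agent 1 has a monotone superadditive valuation and agent 2 an additive valuation, such that the optimal Nash social welfare is positive but every EF1 allocation has Nash social welfare zero. -/
/-- There is an instance with two agents and four goods, where agent 1
has a monotone superadditive valuation and agent 2 an additive valuation, in which the
optimal NSW is positive but every EF1 allocation has NSW zero. -/
theorem stmt_18 :
    ∃ v₁ v₂ : Finset (Fin 4) → ℝ,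
      (∀ S, 0 ≤ v₁ S) ∧ v₁ ∅ = 0 ∧
      (∀ S T : Finset (Fin 4), S ⊆ T → v₁ S ≤ v₁ T) ∧
      (∀ S T : Finset (Fin 4), Disjoint S T → v₁ S + v₁ T ≤ v₁ (S ∪ T)) ∧
      (∀ S, 0 ≤ v₂ S) ∧ v₂ ∅ = 0 ∧
      (∀ S T : Finset (Fin 4), Disjoint S T → v₂ (S ∪ T) = v₂ S + v₂ T) ∧
      (∃ A : Fin 2 → Finset (Fin 4),
        Disjoint (A 0) (A 1) ∧
        A 0 ∪ A 1 = (Finset.univ : Finset (Fin 4)) ∧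
        0 < v₁ (A 0) * v₂ (A 1)) ∧
      (∀ A : Fin 2 → Finset (Fin 4),
        Disjoint (A 0) (A 1) →
        A 0 ∪ A 1 = (Finset.univ : Finset (Fin 4)) →
        (∀ i j : Fin 2, A j ≠ ∅ → ∃ g ∈ A j,
          (if i = 0 then v₁ else v₂) (A j \ {g}) ≤ (if i = 0 then v₁ else v₂) (A i)) →
        v₁ (A 0) * v₂ (A 1) = 0) := by
  refine ⟨fun S => if 3 ≤ S.card then 1 else 0, fun S => (S.card : ℝ), ?_, ?_, ?_, ?_, ?_, ?_, ?_, ?_, ?_⟩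
  · intro S; dsimp only; split <;> norm_num
  · simp
  · intro S T hST
    have := Finset.card_le_card hST
    dsimp only
    split <;> split <;> (try norm_num) <;> omega
  · intro S T hd
    have hc : (S ∪ T).card = S.card + T.card := Finset.card_union_of_disjoint hd
    have h4 : (S ∪ T).card ≤ 4 := by
      simpa using Finset.card_le_card (Finset.subset_univ (S ∪ T))
    dsimp only
    split <;> split <;> split <;> (try norm_num) <;> omega
  · intro S; positivity
  · simp
  · intro S T hd
    dsimp only; rw [Finset.card_union_of_disjoint hd]; push_cast; ring
  · refine ⟨![{0,1,2}, {3}], by decide, by decide, ?_⟩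
    have h3 : ({0,1,2} : Finset (Fin 4)).card = 3 := by decide
    norm_num [h3]
  · intro A hd hu hEF1
    by_contra hne
    have h1 : (3 : ℕ) ≤ (A 0).card := by
      by_contra h
      simp only [if_neg h, zero_mul] at hne
      exact hne trivial
    have hc : (A 0).card + (A 1).card = 4 := by
      rw [← Finset.card_union_of_disjoint hd, hu]; simp
    have hAne : A 0 ≠ ∅ := by
      intro h; rw [h] at h1; simp at h1
    obtain ⟨g, hg, hle⟩ := hEF1 1 0 hAne
    simp only [if_neg (by decide : (1 : Fin 2) ≠ 0)] at hle
    have hcard : ((A 0) \ {g}).card = (A 0).card - 1 := by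
      rw [Finset.card_sdiff_of_subset (by simpa using hg)]; simp
    rw [hcard] at hle
    have : (A 0).card - 1 ≤ (A 1).card := by exact_mod_cast hle
    omega
end
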